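/- arXiv:1606.02100 — 2 statements merged into one kernel-verified Lean document; each statement's English description precedes it below -/
import Mathlib

section
/- Let ρ₀, ρ₁ > 0 and u₀, u₁ be real numbers with ρ₀ ≠ ρ₁. Define κ₁(v) = v(ρ₁ - ρ₀) - (ρ₁u₁ - ρ₀u₀) and κ₂(v) = v(ρ₁u₁ - ρ₀u₀) - (ρ₁u₁² - ρ₀u₀²). Then the equation v·κ₁(v) = κ₂(v) has exactly the two solutions v = (u₁√ρ₁ + u₀√ρ₀)/(√ρ₁ + √ρ₀) and v = (u₁√ρ₁ - u₀√ρ₀)/(√ρ₁ - √ρ₀). -/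
/-! The quadratic `v κ₁(v) - κ₂(v)` equals `ρ₁ (v - u₁)² - ρ₀ (v - u₀)²`, a difference of squares
`(√ρ₁ (v - u₁))² - (√ρ₀ (v - u₀))²`. It vanishes exactly when `√ρ₁ (v - u₁) = ∓ √ρ₀ (v - u₀)`,
and solving these two linear equations gives the two speeds. -/

theorem sq_mul_sub_eq_sq_mul_sub_iff {K : Type*} [Field K] {a b u₀ u₁ v : K}
    (hadd : b + a ≠ 0) (hsub : b - a ≠ 0) :
    (b * (v - u₁)) ^ 2 = (a * (v - u₀)) ^ 2 ↔
      v = (u₁ * b + u₀ * a) / (b + a) ∨ v = (u₁ * b - u₀ * a) / (b - a) := by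
  rw [sq_eq_sq_iff_eq_or_eq_neg, or_comm, eq_div_iff hadd, eq_div_iff hsub]
  refine or_congr ⟨fun h => ?_, fun h => ?_⟩ ⟨fun h => ?_, fun h => ?_⟩ <;> linear_combination h

theorem shock_speed_roots (ρ₀ ρ₁ u₀ u₁ : ℝ) (hρ₀ : 0 < ρ₀) (hρ₁ : 0 < ρ₁)
    (hne : ρ₀ ≠ ρ₁)
    (κ₁ κ₂ : ℝ → ℝ)
    (hκ₁ : ∀ v, κ₁ v = v * (ρ₁ - ρ₀) - (ρ₁ * u₁ - ρ₀ * u₀))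
    (hκ₂ : ∀ v, κ₂ v = v * (ρ₁ * u₁ - ρ₀ * u₀) - (ρ₁ * u₁ ^ 2 - ρ₀ * u₀ ^ 2)) :
    ∀ v : ℝ, v * κ₁ v = κ₂ v ↔
      v = (u₁ * Real.sqrt ρ₁ + u₀ * Real.sqrt ρ₀) / (Real.sqrt ρ₁ + Real.sqrt ρ₀) ∨
      v = (u₁ * Real.sqrt ρ₁ - u₀ * Real.sqrt ρ₀) / (Real.sqrt ρ₁ - Real.sqrt ρ₀) := by
  intro v
  have hsq₀ : Real.sqrt ρ₀ ^ 2 = ρ₀ := Real.sq_sqrt hρ₀.le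
  have hsq₁ : Real.sqrt ρ₁ ^ 2 = ρ₁ := Real.sq_sqrt hρ₁.le
  have hadd : Real.sqrt ρ₁ + Real.sqrt ρ₀ ≠ 0 := by positivity
  have hsub : Real.sqrt ρ₁ - Real.sqrt ρ₀ ≠ 0 :=
    sub_ne_zero.mpr fun h => hne (by rw [← hsq₀, ← hsq₁, h])
  rw [← sq_mul_sub_eq_sq_mul_sub_iff hadd hsub, mul_pow, mul_pow, hsq₀, hsq₁, hκ₁, hκ₂]
  constructor <;> intro h <;> linear_combination h
end

section
/- For all real numbers u₀ ≠ u₁ and ρ₀ > 0, ρ₁ > 0 with ρ₀ ≠ ρ₁, the quantity v₂ = (u₁√ρ₁ - u₀√ρ₀)/(√ρ₁ - √ρ₀) does not lie in the closed interval [min{u₀, u₁}, max{u₀, u₁}]. -/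
/-!
Writing `a = √ρ₀`, `b = √ρ₁`, the speed `v₂ = (u₁ b - u₀ a) / (b - a)` divides the segment
`[u₀, u₁]` externally in the ratio `a : b`. Indeed `v₂ - u₀ = b (u₁ - u₀) / (b - a)` and
`v₂ - u₁ = a (u₁ - u₀) / (b - a)`, so `(v₂ - u₀)(v₂ - u₁) = a b (u₁ - u₀)² / (b - a)² > 0`:
`v₂` lies strictly on the same side of both endpoints.
-/

lemma sub_mul_sub_nonpos_of_mem_Icc_min_max {R : Type*} [CommRing R] [LinearOrder R]
    [IsStrictOrderedRing R] {x y v : R} (hv : v ∈ Set.Icc (min x y) (max x y)) :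
    (v - x) * (v - y) ≤ 0 := by
  rcases le_total x y with h | h
  · rw [min_eq_left h, max_eq_right h] at hv
    exact (sub_mul_sub_nonpos_iff v h).2 hv
  · rw [min_eq_right h, max_eq_left h] at hv
    exact mul_comm (v - x) (v - y) ▸ (sub_mul_sub_nonpos_iff v h).2 hv

lemma external_division_sub_mul_sub {K : Type*} [Field K] {a b x y : K} (hab : a ≠ b) :
    ((y * b - x * a) / (b - a) - x) * ((y * b - x * a) / (b - a) - y) =
      a * b * (y - x) ^ 2 / (b - a) ^ 2 := by
  have hba : b - a ≠ 0 := sub_ne_zero.mpr hab.symm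
  field_simp
  ring

lemma external_division_notMem_Icc_min_max {K : Type*} [Field K] [LinearOrder K]
    [IsStrictOrderedRing K] {a b x y : K} (ha : 0 < a) (hb : 0 < b) (hab : a ≠ b)
    (hxy : x ≠ y) : (y * b - x * a) / (b - a) ∉ Set.Icc (min x y) (max x y) := by
  intro hmem
  have hyx : y - x ≠ 0 := sub_ne_zero.mpr hxy.symm
  have hba : b - a ≠ 0 := sub_ne_zero.mpr hab.symm
  have hpos : 0 < a * b * (y - x) ^ 2 / (b - a) ^ 2 := by positivity
  rw [← external_division_sub_mul_sub hab] at hpos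
  exact (sub_mul_sub_nonpos_of_mem_Icc_min_max hmem).not_gt hpos

theorem second_root_not_overcompressive (ρ₀ ρ₁ u₀ u₁ : ℝ) (hρ₀ : 0 < ρ₀) (hρ₁ : 0 < ρ₁)
    (hρ : ρ₀ ≠ ρ₁) (hu : u₀ ≠ u₁) :
    (u₁ * Real.sqrt ρ₁ - u₀ * Real.sqrt ρ₀) / (Real.sqrt ρ₁ - Real.sqrt ρ₀) ∉
      Set.Icc (min u₀ u₁) (max u₀ u₁) :=
  external_division_notMem_Icc_min_max (Real.sqrt_pos.mpr hρ₀) (Real.sqrt_pos.mpr hρ₁)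
    (mt (Real.sqrt_inj hρ₀.le hρ₁.le).mp hρ) hu
end
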